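/- Let P be a polynomial of degree n having all its zeros in |z| ≤ k with 0 < k ≤ 1; that is, P(z) = α_n ∏_{j=1}^n (z − b_j) = α_0 + α_1 z + ⋯ + α_n z^n with α_n ≠ 0 and |b_j| ≤ k ≤ 1 for j = 1, …, n. Then for every z with |z| = 1, |P′(z)| ≥ (n/(k+1))·[ 1 + (k/n)·( k^n|α_n| − |α_0| )/( k^n|α_n| + |α_0| ) ]·|P(z)|. -/

import Mathlib

open Finset

-- two-variable subadditivity
lemma aux_two (a c : ℝ) (ha0 : 0 ≤ a) (ha1 : a ≤ 1) (hc0 : 0 ≤ c) (hc1 : c ≤ 1) :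
    (1 - a*c)/(1 + a*c) ≤ (1-a)/(1+a) + (1-c)/(1+c) := by
  have h1 : (0:ℝ) < 1 + a := by linarith
  have h2 : (0:ℝ) < 1 + c := by linarith
  have h3 : (0:ℝ) < 1 + a*c := by nlinarith
  have h4 : a * c ≤ 1 := by nlinarith
  have h5 : (0:ℝ) ≤ 1 + a*c - a - c := by nlinarith [mul_nonneg (sub_nonneg.2 ha1) (sub_nonneg.2 hc1)]
  rw [div_add_div _ _ (ne_of_gt h1) (ne_of_gt h2), div_le_div_iff₀ h3 (by positivity)]
  nlinarith [mul_nonneg (sub_nonneg.2 h4) h5]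

lemma aux_prod {ι : Type*} (s : Finset ι) (f : ι → ℝ) (h : ∀ i ∈ s, 0 ≤ f i ∧ f i ≤ 1) :
    (1 - ∏ i ∈ s, f i)/(1 + ∏ i ∈ s, f i) ≤ ∑ i ∈ s, (1 - f i)/(1 + f i) := by
  induction s using Finset.cons_induction with
  | empty => simp
  | cons a s ha ih =>
    have h0 : ∀ i ∈ s, 0 ≤ f i ∧ f i ≤ 1 := fun i hi => h i (Finset.mem_cons_of_mem hi)
    have hp0 : 0 ≤ ∏ i ∈ s, f i := Finset.prod_nonneg fun i hi => (h0 i hi).1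
    have hp1 : ∏ i ∈ s, f i ≤ 1 := Finset.prod_le_one (fun i hi => (h0 i hi).1) (fun i hi => (h0 i hi).2)
    have ha0 := (h a (Finset.mem_cons_self a s)).1
    have ha1 := (h a (Finset.mem_cons_self a s)).2
    rw [Finset.prod_cons, Finset.sum_cons]
    calc (1 - f a * ∏ i ∈ s, f i)/(1 + f a * ∏ i ∈ s, f i)
        ≤ (1 - f a)/(1 + f a) + (1 - ∏ i ∈ s, f i)/(1 + ∏ i ∈ s, f i) :=
          aux_two _ _ ha0 ha1 hp0 hp1
      _ ≤ (1 - f a)/(1 + f a) + ∑ i ∈ s, (1 - f i)/(1 + f i) := by linarith [ih h0]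

lemma aux_re (z w : ℂ) (hz : ‖z‖ = 1) (hw : ‖w‖ ≤ 1) (hzw : z ≠ w) :
    1/(1 + ‖w‖) ≤ (z/(z-w)).re := by
  have hd : z - w ≠ 0 := sub_ne_zero.2 hzw
  have hN : 0 < Complex.normSq (z - w) := Complex.normSq_pos.2 hd
  have hz2 : z.re^2 + z.im^2 = 1 := by
    have h := Complex.sq_norm z; rw [hz, Complex.normSq_apply] at h; nlinarith [h]
  set t := ‖w‖ with ht
  have ht0 : 0 ≤ t := norm_nonneg w
  have ht2 : t^2 = w.re^2 + w.im^2 := by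
    have h := Complex.sq_norm w; rw [Complex.normSq_apply] at h; nlinarith [h]
  have hNeq : Complex.normSq (z - w) = 1 - 2*(z.re*w.re + z.im*w.im) + t^2 := by
    rw [Complex.normSq_apply]; simp [Complex.sub_re, Complex.sub_im]; nlinarith [hz2, ht2]
  have hcauchy : (z.re*w.re + z.im*w.im)^2 ≤ t^2 := by
    nlinarith [sq_nonneg (z.re*w.im - z.im*w.re), hz2, ht2]
  have hr : -t ≤ z.re*w.re + z.im*w.im := by nlinarith [sq_nonneg (t + (z.re*w.re + z.im*w.im))]
  rw [Complex.div_re, ← add_div, div_le_div_iff₀ (by positivity) hN]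
  rw [hNeq]
  simp only [Complex.sub_re, Complex.sub_im]
  nlinarith [hr, hz2, hN.le, hNeq]

lemma perj (k t : ℝ) (hk0 : 0 < k) (hk1 : k ≤ 1) (ht0 : 0 ≤ t) (htk : t ≤ k) :
    1/(1+k) + k/(1+k) * ((k-t)/(k+t)) ≤ 1/(1+t) := by
  have h1 : (0:ℝ) < 1+k := by linarith
  have h2 : (0:ℝ) < k+t := by linarith
  have h3 : (0:ℝ) < 1+t := by linarith
  have key : 1/(1+t) - (1/(1+k) + k/(1+k) * ((k-t)/(k+t)))
      = ((k-t)*(t*(1-k)))/((1+t)*((1+k)*(k+t))) := by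
    field_simp; ring
  nlinarith [key, div_nonneg (mul_nonneg (sub_nonneg.2 htk) (mul_nonneg ht0 (sub_nonneg.2 hk1)))
    (le_of_lt (by positivity : (0:ℝ) < (1+t)*((1+k)*(k+t))))]

theorem stmt16 (n : ℕ) (hn : 0 < n) (k : ℝ) (hk0 : 0 < k) (hk : k ≤ 1)
    (b : Fin n → ℂ) (hb : ∀ j, ‖b j‖ ≤ k)
    (α : ℕ → ℂ) (hαn : α n ≠ 0)
    (P : ℂ → ℂ)
    (hP : ∀ z, P z = α n * ∏ j, (z - b j))
    (hPsum : ∀ z, P z = ∑ i ∈ Finset.range (n + 1), α i * z ^ i)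
    (z : ℂ) (hz : ‖z‖ = 1) :
    ((n : ℝ) / (k + 1)) * (1
          + (k / (n : ℝ))
              * ((k ^ n * ‖α n‖ - ‖α 0‖)
                  / (k ^ n * ‖α n‖ + ‖α 0‖)))
        * ‖P z‖
      ≤ ‖deriv P z‖ := by
  -- α 0 in terms of the roots
  have hα0 : ‖α 0‖ = ‖α n‖ * ∏ j, ‖b j‖ := by
    have h1 : P 0 = α 0 := by
      rw [hPsum 0]
      rw [Finset.sum_eq_single_of_mem 0 (Finset.mem_range.2 (Nat.succ_pos n))]
      · simp
      · intro i _ hi; simp [zero_pow hi]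
    have h2 : P 0 = α n * ∏ j, (0 - b j) := hP 0
    rw [← h1, h2, norm_mul, norm_prod]
    simp
  -- derivative of P
  have hder : HasDerivAt P (α n * ∑ j, ∏ i ∈ Finset.univ.erase j, (z - b i)) z := by
    have h1 : HasDerivAt (fun w => ∏ j, (w - b j))
        (∑ j, ∏ i ∈ Finset.univ.erase j, (z - b i)) z := by
      have h := HasDerivAt.fun_finsetProd (u := Finset.univ) (f := fun (j : Fin n) (w : ℂ) => w - b j)
        (f' := fun _ => 1) (x := z) (fun i _ => (hasDerivAt_id z).sub_const (b i))
      simpa using h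
    have h2 := h1.const_mul (α n)
    have hPe : P = fun w => α n * ∏ j, (w - b j) := funext hP
    rw [hPe]; exact h2
  have hD : deriv P z = α n * ∑ j, ∏ i ∈ Finset.univ.erase j, (z - b i) := hder.deriv
  rcases eq_or_ne (P z) 0 with hPz | hPz
  · rw [hPz]
    simpa using norm_nonneg (deriv P z)
  · have hzb : ∀ j, z - b j ≠ 0 := by
      intro j hj
      apply hPz
      rw [hP z, Finset.prod_eq_zero (Finset.mem_univ j) hj, mul_zero]
    set S := ∑ j, z/(z - b j) with hS
    have hkey : z * deriv P z = S * P z := by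
      calc z * deriv P z = ∑ j, z * (α n * ∏ i ∈ Finset.univ.erase j, (z - b i)) := by
            rw [hD, Finset.mul_sum, Finset.mul_sum]
        _ = ∑ j, (z/(z - b j)) * (α n * ∏ i, (z - b i)) := Finset.sum_congr rfl fun j _ => by
            rw [← Finset.mul_prod_erase _ _ (Finset.mem_univ j)]
            field_simp [hzb j]
        _ = S * P z := by rw [hS, hP z, Finset.sum_mul]
    have habs : ‖deriv P z‖ = ‖S‖ * ‖P z‖ := by
      have h := congrArg (‖·‖) hkey
      rwa [norm_mul, norm_mul, hz, one_mul] at h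
    have hPos : 0 ≤ ‖P z‖ := norm_nonneg _
    set G := (k ^ n * ‖α n‖ - ‖α 0‖)
        / (k ^ n * ‖α n‖ + ‖α 0‖) with hG
    set C := ((n : ℝ) / (k + 1)) * (1 + (k / (n : ℝ)) * G) with hC
    suffices hCS : C ≤ S.re by
      calc C * ‖P z‖ ≤ S.re * ‖P z‖ :=
            mul_le_mul_of_nonneg_right hCS hPos
        _ ≤ ‖S‖ * ‖P z‖ :=
            mul_le_mul_of_nonneg_right (Complex.re_le_norm S) hPos
        _ = ‖deriv P z‖ := habs.symm
    have hn' : (0:ℝ) < (n:ℝ) := Nat.cast_pos.2 hn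
    set t : Fin n → ℝ := fun j => ‖b j‖ with ht
    have ht0 : ∀ j, 0 ≤ t j := fun j => norm_nonneg _
    have step1 : ∑ j, 1/(1 + t j) ≤ S.re := by
      rw [hS, Complex.re_sum]
      exact Finset.sum_le_sum fun j _ =>
        aux_re z (b j) hz ((hb j).trans hk) (sub_ne_zero.mp (hzb j))
    have step2 : ∑ j, (1/(1+k) + k/(1+k) * ((k - t j)/(k + t j))) ≤ ∑ j, 1/(1 + t j) :=
      Finset.sum_le_sum fun j _ => perj k (t j) hk0 hk (ht0 j) (hb j)
    have step3 : ∑ j, (1/(1+k) + k/(1+k) * ((k - t j)/(k + t j)))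
        = (n:ℝ)/(1+k) + k/(1+k) * ∑ j, (k - t j)/(k + t j) := by
      rw [Finset.sum_add_distrib, Finset.sum_const, Finset.card_univ, Fintype.card_fin,
        ← Finset.mul_sum, nsmul_eq_mul]
      ring
    have step4 : (1 - ∏ j, t j / k)/(1 + ∏ j, t j / k) ≤ ∑ j, (k - t j)/(k + t j) := by
      calc (1 - ∏ j, t j / k)/(1 + ∏ j, t j / k)
          ≤ ∑ j, (1 - t j / k)/(1 + t j / k) :=
            aux_prod _ _ (fun j _ => ⟨by positivity, by rw [div_le_one hk0]; exact hb j⟩)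
        _ = ∑ j, (k - t j)/(k + t j) := Finset.sum_congr rfl fun j _ => by
            have h1 : 0 < k + t j := by linarith [ht0 j]
            field_simp
    have hA : 0 < ‖α n‖ := norm_pos_iff.2 hαn
    have hB0 : 0 ≤ ‖α 0‖ := norm_nonneg _
    have hQ : (0:ℝ) < k^n * ‖α n‖ := by positivity
    have hp : ∏ j, t j / k = ‖α 0‖ / (k^n * ‖α n‖) := by
      rw [Finset.prod_div_distrib, Finset.prod_const, Finset.card_univ, Fintype.card_fin, hα0]
      field_simp
    have hp0 : 0 ≤ ∏ j, t j / k := Finset.prod_nonneg fun j _ => by positivity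
    have hGeq : G = (1 - ∏ j, t j / k)/(1 + ∏ j, t j / k) := by
      have hd1 : (0:ℝ) < k^n * ‖α n‖ + ‖α 0‖ := by linarith
      have hd2 : (0:ℝ) < 1 + ∏ j, t j / k := by linarith
      rw [hG, hp, div_eq_div_iff hd1.ne' (by rw [hp] at hd2; exact hd2.ne')]
      field_simp
    have hCeq : C = (n:ℝ)/(1+k) + k/(1+k) * G := by
      rw [hC]
      field_simp
      ring
    have hkk : (0:ℝ) ≤ k/(1+k) := by positivity
    calc C = (n:ℝ)/(1+k) + k/(1+k) * ((1 - ∏ j, t j / k)/(1 + ∏ j, t j / k)) := by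
          rw [hCeq, hGeq]
      _ ≤ (n:ℝ)/(1+k) + k/(1+k) * ∑ j, (k - t j)/(k + t j) := by
          nlinarith [mul_le_mul_of_nonneg_left step4 hkk]
      _ = ∑ j, (1/(1+k) + k/(1+k) * ((k - t j)/(k + t j))) := step3.symm
      _ ≤ ∑ j, 1/(1 + t j) := step2
      _ ≤ S.re := step1
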